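/- Let B be a unital C*-algebra, let A be a unital pro-C*-algebra, and let φ : B → A be a unital *-algebra homomorphism (no continuity assumed). Then p(φ(b)) ≤ ‖b‖ for every b ∈ B and every continuous C*-seminorm p on A; in particular φ takes values in the C*-algebra A_b of bounded elements and ‖φ(b)‖_∞ ≤ ‖b‖ for all b ∈ B, so φ factors (uniquely) through the inclusion A_b ↪ A. (This expresses that (−)_b is a coreflector from pro-C*-algebras to C*-algebras.) -/

import Mathlib

open scoped ENNReal

def IsCStarSeminorm {A : Type*} [Ring A] [StarRing A] [Algebra ℂ A] (p : A → ℝ) : Prop :=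
  (∀ a, 0 ≤ p a) ∧ (∀ a b, p (a + b) ≤ p a + p b) ∧
    (∀ (c : ℂ) (a : A), p (c • a) = ‖c‖ * p a) ∧
    (∀ a b, p (a * b) ≤ p a * p b) ∧ (∀ a, p (star a * a) = p a ^ 2)

def contCStarSeminorms (A : Type*) [TopologicalSpace A] [Ring A] [StarRing A] [Algebra ℂ A] :
    Set (A → ℝ) :=
  {p | IsCStarSeminorm p ∧ Continuous p}

class ProCStarAlgebra (A : Type*) [UniformSpace A] [Ring A] [StarRing A] [Algebra ℂ A] :
    Prop where
  t2 : T2Space A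
  complete : CompleteSpace A
  topologicalRing : IsTopologicalRing A
  continuousStar : ContinuousStar A
  uniformAddGroup : IsUniformAddGroup A
  mem_nhds_zero : ∀ s : Set A, s ∈ nhds (0 : A) ↔
    ∃ p ∈ contCStarSeminorms A, ∃ ε : ℝ, 0 < ε ∧ {a : A | p a < ε} ⊆ s

noncomputable def uniformNorm (A : Type*) [UniformSpace A] [Ring A] [StarRing A] [Algebra ℂ A]
    (a : A) : ℝ≥0∞ :=
  ⨆ p ∈ contCStarSeminorms A, ENNReal.ofReal (p a)

def boundedElems (A : Type*) [UniformSpace A] [Ring A] [StarRing A] [Algebra ℂ A] : Set A :=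
  {a | uniformNorm A a < ⊤}

def expSet (A : Type*) [UniformSpace A] [Ring A] [StarRing A] [Algebra ℂ A] : Set A :=
  {w | ∃ (n : ℕ) (a e : Fin n → A),
    (∀ j, star (a j) = a j) ∧
    (∀ j, HasSum (fun k : ℕ => ((Complex.I ^ k / (k.factorial : ℂ)) • a j ^ k)) (e j)) ∧
    w = (List.ofFn e).prod}

/-!
Pull a continuous C⋆-seminorm `p` on `A` back along `φ` to the C⋆-seminorm `q = p ∘ φ` on `B`;
nothing about continuity of `q` is known. For self-adjoint `h` the C⋆-identity gives
`q (h ^ 2 ^ k) = q h ^ 2 ^ k`, so by Gelfand's formula in the completion of `(B, q)` the number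
`q h` is the spectral radius of the image of `h` there. Spectra only shrink under algebra
homomorphisms, so `q h` is at most the spectral radius of `h` in `B`, hence at most `‖h‖`.
Taking `h = star b * b` gives `q b ≤ ‖b‖`.
-/

open scoped NNReal
open Filter UniformSpace

theorem spectrum.spectralRadius_eq_nnnorm_of_nnnorm_pow_two_pow {A : Type*} [NormedRing A]
    [NormedAlgebra ℂ A] [CompleteSpace A] {a : A} (h : ∀ k : ℕ, ‖a ^ 2 ^ k‖₊ = ‖a‖₊ ^ 2 ^ k) :
    spectralRadius ℂ a = ‖a‖₊ := by
  have hconst : Tendsto (fun _ : ℕ => (‖a‖₊ : ℝ≥0∞)) atTop _ := tendsto_const_nhds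
  refine tendsto_nhds_unique ?_ hconst
  convert! (spectrum.pow_nnnorm_pow_one_div_tendsto_nhds_spectralRadius a).comp
    (tendsto_pow_atTop_atTop_of_one_lt one_lt_two) using 1
  refine funext fun k => ?_
  rw [Function.comp_apply, h, ENNReal.coe_pow, ← ENNReal.rpow_natCast, ← ENNReal.rpow_mul]
  simp

theorem spectrum.nnnorm_le_spectralRadius_of_nnnorm_pow_two_pow {A : Type*} [SeminormedRing A]
    [NormedAlgebra ℂ A] {a : A} (h : ∀ k : ℕ, ‖a ^ 2 ^ k‖₊ = ‖a‖₊ ^ 2 ^ k) :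
    (‖a‖₊ : ℝ≥0∞) ≤ spectralRadius ℂ a := by
  let : NormedAlgebra ℂ (Completion A) :=
    { Completion.algebra A ℂ with norm_smul_le := norm_smul_le }
  let ψ : A →ₐ[ℂ] Completion A :=
    { Completion.coeRingHom with commutes' := fun c => (Completion.algebraMap_def A ℂ c).symm }
  have hψ (x : A) : ‖ψ x‖₊ = ‖x‖₊ := Completion.nnnorm_coe x
  have hρ : spectralRadius ℂ (ψ a) = ‖a‖₊ := by
    rw [spectrum.spectralRadius_eq_nnnorm_of_nnnorm_pow_two_pow, hψ]
    intro k
    rw [← map_pow, hψ, hψ, h]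
  rw [← hρ]
  exact iSup_le_iSup_of_subset (AlgHom.spectrum_apply_subset ψ a)

namespace IsCStarSeminorm

variable {R : Type*} [Ring R] [StarRing R] [Algebra ℂ R] {p : R → ℝ}

theorem map_zero (hp : IsCStarSeminorm p) : p 0 = 0 := by
  simpa using hp.2.2.1 0 0

theorem map_neg (hp : IsCStarSeminorm p) (a : R) : p (-a) = p a := by
  simpa using hp.2.2.1 (-1) a

def toRingSeminorm (hp : IsCStarSeminorm p) : RingSeminorm R where
  toFun := p
  map_zero' := hp.map_zero
  add_le' := hp.2.1
  neg' := hp.map_neg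
  mul_le' := hp.2.2.2.1

theorem map_pow_two_pow (hp : IsCStarSeminorm p) {a : R} (ha : IsSelfAdjoint a) (k : ℕ) :
    p (a ^ 2 ^ k) = p a ^ 2 ^ k := by
  induction k with
  | zero => simp
  | succ k ih =>
    have hsq : a ^ 2 ^ (k + 1) = star (a ^ 2 ^ k) * a ^ 2 ^ k := by
      rw [star_pow, ha.star_eq, ← pow_add, ← two_mul, pow_succ, mul_comm]
    rw [hsq, hp.2.2.2.2, ih, ← pow_mul, ← pow_succ]

theorem ofReal_le_spectralRadius (hp : IsCStarSeminorm p) {a : R} (ha : IsSelfAdjoint a) :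
    ENNReal.ofReal (p a) ≤ spectralRadius ℂ a := by
  let : SeminormedRing R := hp.toRingSeminorm.toSeminormedRing
  let : NormedAlgebra ℂ R := { norm_smul_le := fun c x => (hp.2.2.1 c x).le }
  have := spectrum.nnnorm_le_spectralRadius_of_nnnorm_pow_two_pow (a := a) fun k =>
    NNReal.eq <| by rw [NNReal.coe_pow]; exact hp.map_pow_two_pow ha k
  rwa [← enorm_eq_nnnorm, ← ofReal_norm] at this

theorem le_norm {B : Type*} [NormedRing B] [StarRing B] [CStarRing B] [NormedAlgebra ℂ B]
    [CompleteSpace B] {p : B → ℝ} (hp : IsCStarSeminorm p) (b : B) : p b ≤ ‖b‖ := by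
  obtain hB | hB := subsingleton_or_nontrivial B
  · simp [Subsingleton.elim b 0, hp.map_zero]
  have hsa : ENNReal.ofReal (p (star b * b)) ≤ ENNReal.ofReal ‖star b * b‖ := by
    rw [ofReal_norm]
    exact (hp.ofReal_le_spectralRadius (.star_mul_self b)).trans
      (spectrum.spectralRadius_le_nnnorm _)
  rw [ENNReal.ofReal_le_ofReal_iff (norm_nonneg _), hp.2.2.2.2, CStarRing.norm_star_mul_self,
    ← sq] at hsa
  exact (pow_le_pow_iff_left₀ (hp.1 b) (norm_nonneg b) two_ne_zero).mp hsa

theorem comp_starAlgHom {S : Type*} [Ring S] [StarRing S] [Algebra ℂ S] (hp : IsCStarSeminorm p)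
    (φ : S →⋆ₐ[ℂ] R) : IsCStarSeminorm (p ∘ φ) := by
  obtain ⟨hnn, hadd, hsmul, hmul, hstar⟩ := hp
  refine ⟨fun a => hnn _, fun a b => ?_, fun c a => ?_, fun a b => ?_, fun a => ?_⟩ <;>
    simp only [Function.comp_apply, map_add, map_smul, map_mul, map_star]
  exacts [hadd _ _, hsmul _ _, hmul _ _, hstar _]

end IsCStarSeminorm

theorem stmt6_general {B A : Type*}
    [NormedRing B] [StarRing B] [CStarRing B] [NormedAlgebra ℂ B] [CompleteSpace B]
    [UniformSpace A] [Ring A] [StarRing A] [Algebra ℂ A]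
    (φ : B →⋆ₐ[ℂ] A) :
    (∀ p ∈ contCStarSeminorms A, ∀ b : B, p (φ b) ≤ ‖b‖) ∧
    (∀ b : B, uniformNorm A (φ b) ≤ ENNReal.ofReal ‖b‖) ∧
    Set.range φ ⊆ boundedElems A := by
  have hp : ∀ p ∈ contCStarSeminorms A, ∀ b : B, p (φ b) ≤ ‖b‖ := fun p hp =>
    (hp.1.comp_starAlgHom φ).le_norm
  have hu : ∀ b : B, uniformNorm A (φ b) ≤ ENNReal.ofReal ‖b‖ := fun b =>
    iSup₂_le fun p hp' => ENNReal.ofReal_le_ofReal (hp p hp' b)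
  refine ⟨hp, hu, ?_⟩
  rintro _ ⟨b, rfl⟩
  exact (hu b).trans_lt ENNReal.ofReal_lt_top

/-- If `B` is a unital C*-algebra, `A` a unital pro-C*-algebra, and
`φ : B → A` a (not necessarily continuous) unital *-algebra homomorphism, then
`p (φ b) ≤ ‖b‖` for every continuous C*-seminorm `p` on `A`; in particular
`‖φ b‖_∞ ≤ ‖b‖`, so `φ` takes values in `A_b` and factors through the inclusion
`A_b ↪ A`.  (This expresses that `(-)_b` is a coreflector.) -/
theorem stmt6 {B A : Type*}
    [NormedRing B] [StarRing B] [CStarRing B] [NormedAlgebra ℂ B] [CompleteSpace B]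
    [UniformSpace A] [Ring A] [StarRing A] [Algebra ℂ A] [ProCStarAlgebra A]
    (φ : B →⋆ₐ[ℂ] A) :
    (∀ p ∈ contCStarSeminorms A, ∀ b : B, p (φ b) ≤ ‖b‖) ∧
    (∀ b : B, uniformNorm A (φ b) ≤ ENNReal.ofReal ‖b‖) ∧
    Set.range φ ⊆ boundedElems A :=
  stmt6_general φ
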